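/- arXiv:1701.02260 — 4 statements merged into one kernel-verified Lean document; each statement's English description precedes it below -/
import Mathlib

section
/- Let T : Ω̄ → X map bounded sets into relatively compact sets, and let 𝕋 be its closed-convex envelope. Then 𝕋 is upper semicontinuous: for any sequence x_n → x in Ω̄ and y_n ∈ 𝕋x_n with y_n → y, we have y ∈ 𝕋x. -/
open Set Metric Filter

/-- The closed-convex envelope of `T` relative to the set `Ω`. -/
def ccEnvelope {X : Type*} [NormedAddCommGroup X] [NormedSpace ℝ X]
    (Ω : Set X) (T : X → X) (x : X) : Set X :=
  ⋂ ε > (0 : ℝ), closure (convexHull ℝ (T '' (closedBall x ε ∩ Ω)))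

section ccEnvelope

variable {X : Type*} [NormedAddCommGroup X] [NormedSpace ℝ X] {Ω : Set X} {T : X → X}

theorem mem_ccEnvelope_iff {x y : X} :
    y ∈ ccEnvelope Ω T x ↔ ∀ ε > 0, y ∈ closure (convexHull ℝ (T '' (closedBall x ε ∩ Ω))) := by
  simp only [ccEnvelope, mem_iInter]

theorem ccEnvelope_subset_of_closedBall_subset {x z : X} {δ ε : ℝ} (hδ : 0 < δ)
    (h : closedBall z δ ⊆ closedBall x ε) :
    ccEnvelope Ω T z ⊆ closure (convexHull ℝ (T '' (closedBall x ε ∩ Ω))) := fun _ hy =>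
  closure_mono (convexHull_mono (image_mono (inter_subset_inter_left _ h)))
    (mem_ccEnvelope_iff.mp hy δ hδ)

theorem mem_ccEnvelope_of_tendsto {ι : Type*} {l : Filter ι} [l.NeBot] {u v : ι → X} {x y : X}
    (hux : Tendsto u l (nhds x)) (hvy : Tendsto v l (nhds y))
    (hv : ∀ᶠ i in l, v i ∈ ccEnvelope Ω T (u i)) :
    y ∈ ccEnvelope Ω T x := by
  refine mem_ccEnvelope_iff.mpr fun ε hε => isClosed_closure.mem_of_tendsto hvy ?_
  filter_upwards [hv, hux.eventually (closedBall_mem_nhds x (half_pos hε))] with i hvi hui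
  refine ccEnvelope_subset_of_closedBall_subset (half_pos hε) ?_ hvi
  exact closedBall_subset_closedBall' (by linarith)

end ccEnvelope

theorem stmt3_general {X : Type*} [NormedAddCommGroup X] [NormedSpace ℝ X]
    (Ω : Set X) (T : X → X)
    (x : X) (u : ℕ → X)
    (hux : Tendsto u atTop (nhds x))
    (y : X) (v : ℕ → X) (hv : ∀ n, v n ∈ ccEnvelope Ω T (u n))
    (hvy : Tendsto v atTop (nhds y)) :
    y ∈ ccEnvelope Ω T x :=
  mem_ccEnvelope_of_tendsto hux hvy (Eventually.of_forall hv)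

theorem stmt3 {X : Type*} [NormedAddCommGroup X] [NormedSpace ℝ X] [CompleteSpace X]
    (Ω : Set X) (hΩ : Ω.Nonempty) (T : X → X)
    (hT : ∀ B ⊆ Ω, Bornology.IsBounded B → IsCompact (closure (T '' B)))
    (x : X) (hx : x ∈ Ω) (u : ℕ → X) (hu : ∀ n, u n ∈ Ω)
    (hux : Tendsto u atTop (nhds x))
    (y : X) (v : ℕ → X) (hv : ∀ n, v n ∈ ccEnvelope Ω T (u n))
    (hvy : Tendsto v atTop (nhds y)) :
    y ∈ ccEnvelope Ω T x :=
  stmt3_general Ω T x u hux y v hv hvy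
end

section
/- Let 𝕋 be the closed-convex envelope of T : Ω̄ → X. If 𝕋' : Ω̄ → 2^X is an upper semicontinuous multivalued operator with closed convex values such that Tx ∈ 𝕋'x for all x ∈ Ω̄, then 𝕋x ⊆ 𝕋'x for all x ∈ Ω̄. That is, 𝕋 is the smallest closed-and-convex-valued upper semicontinuous operator having T as a selection. -/
open Set Metric

theorem stmt5 {X : Type*} [NormedAddCommGroup X] [NormedSpace ℝ X] [CompleteSpace X]
    (Ω : Set X) (hΩ : Ω.Nonempty) (T : X → X) (T' : X → Set X)
    (hclosed : ∀ x ∈ Ω, IsClosed (T' x))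
    (hconv : ∀ x ∈ Ω, Convex ℝ (T' x))
    (hsel : ∀ x ∈ Ω, T x ∈ T' x)
    (husc : ∀ x ∈ Ω, ∀ V : Set X, IsOpen V → T' x ⊆ V →
      ∃ δ > (0 : ℝ), ∀ z ∈ closedBall x δ ∩ Ω, T' z ⊆ V) :
    ∀ x ∈ Ω, ccEnvelope Ω T x ⊆ T' x := by
  intro x hx y hy
  by_contra hyn
  have hne : (T' x).Nonempty := ⟨T x, hsel x hx⟩
  have hpos : 0 < infDist y (T' x) :=
    ((hclosed x hx).notMem_iff_infDist_pos hne).mp hyn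
  set r := infDist y (T' x) / 2 with hr
  have hrpos : 0 < r := by positivity
  have hVopen : IsOpen (thickening r (T' x)) := isOpen_thickening
  have hVsub : T' x ⊆ thickening r (T' x) := self_subset_thickening hrpos _
  obtain ⟨δ, hδpos, hδ⟩ := husc x hx _ hVopen hVsub
  have hyδ : y ∈ closure (convexHull ℝ (T '' (closedBall x δ ∩ Ω))) := by
    have := mem_iInter₂.mp hy δ hδpos
    exact this
  have himg : T '' (closedBall x δ ∩ Ω) ⊆ thickening r (T' x) := by
    rintro _ ⟨z, hz, rfl⟩
    exact hδ z hz (hsel z hz.2)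
  have hconvV : Convex ℝ (thickening r (T' x)) := (hconv x hx).thickening r
  have hhull : convexHull ℝ (T '' (closedBall x δ ∩ Ω)) ⊆ thickening r (T' x) :=
    convexHull_min himg hconvV
  have hcl : closure (convexHull ℝ (T '' (closedBall x δ ∩ Ω))) ⊆ cthickening r (T' x) :=
    (closure_mono hhull).trans ((closure_mono (thickening_subset_cthickening r _)).trans
      (isClosed_cthickening.closure_subset))
  have : infDist y (T' x) ≤ r := by
    have h1 : EMetric.infEdist y (T' x) ≤ ENNReal.ofReal r := mem_cthickening_iff.mp (hcl hyδ)
    have h2 := ENNReal.toReal_mono ENNReal.ofReal_ne_top h1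
    rwa [ENNReal.toReal_ofReal hrpos.le] at h2
  linarith
end

section
/- Let g, h ∈ L¹(a,b) with g ≥ 0 a.e. and h > 0 a.e. on (a,b). For every measurable set J ⊆ (a,b) with m(J) > 0, there is a measurable set J₀ ⊆ J with m(J \ J₀) = 0 such that for all τ₀ ∈ J₀: lim_{t→τ₀⁺} (∫_{[τ₀,t]\J} g ds)/(∫_{τ₀}^{t} h ds) = 0 and lim_{t→τ₀⁻} (∫_{[t,τ₀]\J} g ds)/(∫_{t}^{τ₀} h ds) = 0. -/
/-!
By the Lebesgue differentiation theorem, at almost every point the primitives of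
`G = 1_{(a,b) \ J} g` and `H = 1_{(a,b)} h` are differentiable with derivatives `G τ₀`
and `H τ₀`. At such a point `τ₀ ∈ J` these are `0` and `h τ₀ > 0`, so the ratio of the
increments of the primitives, which is the quotient in the statement, tends to `0 / h τ₀ = 0`.
-/

open Set Filter MeasureTheory intervalIntegral

open scoped Topology

theorem HasDerivAt.tendsto_sub_div_sub {𝕜 : Type*} [NontriviallyNormedField 𝕜]
    {f g : 𝕜 → 𝕜} {f' g' x : 𝕜} (hf : HasDerivAt f f' x) (hg : HasDerivAt g g' x)
    (hg' : g' ≠ 0) :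
    Tendsto (fun t => (f t - f x) / (g t - g x)) (𝓝[≠] x) (𝓝 (f' / g')) := by
  refine ((hasDerivAt_iff_tendsto_slope.1 hf).div (hasDerivAt_iff_tendsto_slope.1 hg)
    hg').congr' ?_
  filter_upwards [self_mem_nhdsWithin] with t ht
  rw [Pi.div_apply, slope_def_field, slope_def_field]
  exact div_div_div_cancel_right₀ (sub_ne_zero.2 ht) _ _

theorem tendsto_intervalIntegral_div_intervalIntegral {F K : ℝ → ℝ} {x : ℝ}
    (hF : HasDerivAt (fun t => ∫ s in x..t, F s) (F x) x)
    (hK : HasDerivAt (fun t => ∫ s in x..t, K s) (K x) x) (hKx : K x ≠ 0) :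
    Tendsto (fun t => (∫ s in x..t, F s) / ∫ s in x..t, K s) (𝓝[≠] x)
      (𝓝 (F x / K x)) := by
  simpa only [integral_same, sub_zero] using hF.tendsto_sub_div_sub hK hKx

theorem MeasureTheory.exists_measurableSet_subset_of_ae_restrict {α : Type*}
    [MeasurableSpace α] {μ : Measure α} {J : Set α} (hJ : MeasurableSet J) {p : α → Prop}
    (hp : ∀ᵐ x ∂μ.restrict J, p x) :
    ∃ J₀ ⊆ J, MeasurableSet J₀ ∧ μ (J \ J₀) = 0 ∧ ∀ x ∈ J₀, p x := by
  obtain ⟨s, hs_ae, hs, hps⟩ := hp.exists_measurable_mem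
  refine ⟨J ∩ s, inter_subset_left, hJ.inter hs, ?_, fun x hx => hps x hx.2⟩
  rw [sdiff_self_inter, sdiff_eq, inter_comm, ← Measure.restrict_apply hs.compl]
  exact hs_ae

theorem intervalIntegral_indicator_eq_setIntegral_Icc_inter {E : Type*} [NormedAddCommGroup E]
    [NormedSpace ℝ E] {f : ℝ → E} {S : Set ℝ}
    (hS : MeasurableSet S) {u v : ℝ} (huv : u ≤ v) :
    ∫ s in u..v, S.indicator f s = ∫ s in Icc u v ∩ S, f s := by
  rw [integral_of_le huv, ← integral_Icc_eq_integral_Ioc, setIntegral_indicator hS]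

theorem setIntegral_Icc_diff_div_intervalIntegral_eq {f k : ℝ → ℝ} {S J : Set ℝ}
    (hS : MeasurableSet S) (hJ : MeasurableSet J) {u v : ℝ} (huv : u ≤ v)
    (hsub : Icc u v ⊆ S) :
    (∫ s in Icc u v \ J, f s) / ∫ s in u..v, k s =
      (∫ s in u..v, (S \ J).indicator f s) / ∫ s in u..v, S.indicator k s := by
  rw [intervalIntegral_indicator_eq_setIntegral_Icc_inter (hS.diff hJ) huv,
    intervalIntegral_indicator_eq_setIntegral_Icc_inter hS huv, ← inter_sdiff_assoc,
    inter_eq_self_of_subset_left hsub, integral_Icc_eq_integral_Ioc,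
    ← integral_of_le huv]

theorem stmt12_general (a b : ℝ) (g h : ℝ → ℝ)
    (hg : IntegrableOn g (Ioo a b)) (hh : IntegrableOn h (Ioo a b))
    (hh0 : ∀ᵐ s ∂volume.restrict (Ioo a b), 0 < h s)
    (J : Set ℝ) (hJ : MeasurableSet J) (hJsub : J ⊆ Ioo a b) :
    ∃ J₀ ⊆ J, MeasurableSet J₀ ∧ volume (J \ J₀) = 0 ∧
      ∀ τ₀ ∈ J₀,
        Tendsto (fun t => (∫ s in Icc τ₀ t \ J, g s) / ∫ s in τ₀..t, h s)
          (nhdsWithin τ₀ (Ioi τ₀)) (nhds 0) ∧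
        Tendsto (fun t => (∫ s in Icc t τ₀ \ J, g s) / ∫ s in t..τ₀, h s)
          (nhdsWithin τ₀ (Iio τ₀)) (nhds 0) := by
  have hG := LocallyIntegrable.ae_hasDerivAt_integral
    ((hg.mono_set sdiff_subset).integrable_indicator (measurableSet_Ioo.diff hJ)).locallyIntegrable
  have hH := LocallyIntegrable.ae_hasDerivAt_integral
    (hh.integrable_indicator measurableSet_Ioo).locallyIntegrable
  obtain ⟨J₀, hJ₀J, hJ₀, hJJ₀, hgood⟩ := exists_measurableSet_subset_of_ae_restrict hJ
    ((ae_restrict_of_ae (hG.and hH)).and (ae_restrict_of_ae_restrict_of_subset hJsub hh0))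
  refine ⟨J₀, hJ₀J, hJ₀, hJJ₀, fun τ₀ hτ₀ => ?_⟩
  obtain ⟨⟨hGτ₀, hHτ₀⟩, hpos⟩ := hgood τ₀ hτ₀
  have hτ₀ab := hJsub (hJ₀J hτ₀)
  have hlim := tendsto_intervalIntegral_div_intervalIntegral (hGτ₀ τ₀) (hHτ₀ τ₀)
    (by rw [indicator_of_mem hτ₀ab]; exact hpos.ne')
  rw [indicator_of_notMem (fun hx => hx.2 (hJ₀J hτ₀)), zero_div] at hlim
  constructor
  · refine (hlim.mono_left (nhdsGT_le_nhdsNE τ₀)).congr' ?_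
    filter_upwards [Ioo_mem_nhdsGT hτ₀ab.2] with t ht
    exact (setIntegral_Icc_diff_div_intervalIntegral_eq measurableSet_Ioo hJ ht.1.le
      (Icc_subset_Ioo hτ₀ab.1 ht.2)).symm
  · refine (hlim.mono_left (nhdsLT_le_nhdsNE τ₀)).congr' ?_
    filter_upwards [Ioo_mem_nhdsLT hτ₀ab.1] with t ht
    rw [setIntegral_Icc_diff_div_intervalIntegral_eq measurableSet_Ioo hJ ht.2.le
      (Icc_subset_Ioo ht.1 hτ₀ab.2), integral_symm τ₀, integral_symm τ₀, neg_div_neg_eq]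

theorem stmt12 (a b : ℝ) (hab : a < b) (g h : ℝ → ℝ)
    (hg : IntegrableOn g (Ioo a b)) (hh : IntegrableOn h (Ioo a b))
    (hg0 : ∀ᵐ s ∂volume.restrict (Ioo a b), 0 ≤ g s)
    (hh0 : ∀ᵐ s ∂volume.restrict (Ioo a b), 0 < h s)
    (J : Set ℝ) (hJ : MeasurableSet J) (hJsub : J ⊆ Ioo a b)
    (hJpos : 0 < volume J) :
    ∃ J₀ ⊆ J, MeasurableSet J₀ ∧ volume (J \ J₀) = 0 ∧
      ∀ τ₀ ∈ J₀,
        Tendsto (fun t => (∫ s in Icc τ₀ t \ J, g s) / ∫ s in τ₀..t, h s)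
          (nhdsWithin τ₀ (Ioi τ₀)) (nhds 0) ∧
        Tendsto (fun t => (∫ s in Icc t τ₀ \ J, g s) / ∫ s in t..τ₀, h s)
          (nhdsWithin τ₀ (Iio τ₀)) (nhds 0) :=
  stmt12_general a b g h hg hh hh0 J hJ hJsub
end

section
/- Let f, f_n : [a,b] → ℝ be absolutely continuous functions with f_n → f uniformly on [a,b]. Suppose there is a measurable set A ⊆ [a,b] with m(A) > 0 and a function g with f_n'(t) → g(t) for a.a. t ∈ A, and there exists M ∈ L¹(a,b) with |f'(t)| ≤ M(t) a.e. and |f_n'(t)| ≤ M(t) a.e. for all n. Then f'(t) = g(t) for a.a. t ∈ A. -/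
/-!
Uniform convergence gives `F n t - F n a → f t - f a`, i.e. `∫_{[a,t]} F'ₙ → ∫_{[a,t]} f'`.
The half-lines `Iic t` form a π-system generating the Borel sets, and under the common integrable
bound `M` the sets over which the integrals converge are closed under complements and countable
disjoint unions (Tannery's theorem), so `∫_E F'ₙ → ∫_E f'` for every measurable `E ⊆ [a,b]`.
For `E ⊆ A` dominated convergence gives `∫_E F'ₙ → ∫_E g` instead, so `f'` and `g` have the same
integrals over all measurable subsets of `A` and hence agree a.e. on `A`.
-/

open Set Filter MeasureTheory intervalIntegral

/-- `f` is absolutely continuous on `[a,b]` with density (a.e. derivative) `f'`. -/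
def AbsContOn (f f' : ℝ → ℝ) (a b : ℝ) : Prop :=
  IntegrableOn f' (Icc a b) ∧ ∀ t ∈ Icc a b, f t = f a + ∫ s in a..t, f' s

open Topology

section SetwiseConvergence

variable {α E : Type*} [MeasurableSpace α] {μ : Measure α}
  [NormedAddCommGroup E] [NormedSpace ℝ E] [CompleteSpace E] {M : α → ℝ}

theorem tendsto_setIntegral_of_isPiSystem {ι : Type*} {l : Filter ι} {F : ι → α → E}
    {f : α → E} {C : Set (Set α)}
    (hgen : ‹MeasurableSpace α› = MeasurableSpace.generateFrom C) (hC : IsPiSystem C)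
    (hM : Integrable M μ) (hF : ∀ i, Integrable (F i) μ) (hbound : ∀ i, ∀ᵐ x ∂μ, ‖F i x‖ ≤ M x)
    (hf : Integrable f μ)
    (huniv : Tendsto (fun i => ∫ x, F i x ∂μ) l (𝓝 (∫ x, f x ∂μ)))
    (hbasic : ∀ s ∈ C, Tendsto (fun i => ∫ x in s, F i x ∂μ) l (𝓝 (∫ x in s, f x ∂μ)))
    {s : Set α} (hs : MeasurableSet s) :
    Tendsto (fun i => ∫ x in s, F i x ∂μ) l (𝓝 (∫ x in s, f x ∂μ)) := by
  induction s, hs using MeasurableSpace.induction_on_inter hgen hC with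
  | empty => simpa using tendsto_const_nhds
  | basic s hs => exact hbasic s hs
  | compl s hs ihs =>
    simp_rw [setIntegral_compl hs (hF _), setIntegral_compl hs hf]
    exact huniv.sub ihs
  | iUnion s hdisj hs ihs =>
    simp_rw [integral_iUnion hs hdisj (hF _).integrableOn, integral_iUnion hs hdisj hf.integrableOn]
    refine tendsto_tsum_of_dominated_convergence
      (hasSum_integral_iUnion hs hdisj hM.integrableOn).summable ihs (Eventually.of_forall ?_)
    exact fun i k => norm_integral_le_of_norm_le hM.integrableOn (ae_restrict_of_ae (hbound i))

theorem ae_eq_of_tendsto_setIntegral_of_tendsto_ae {F : ℕ → α → E} {f g : α → E}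
    (hM : Integrable M μ) (hF : ∀ n, AEStronglyMeasurable (F n) μ)
    (hbound : ∀ n, ∀ᵐ x ∂μ, ‖F n x‖ ≤ M x) (hf : Integrable f μ)
    (hset : ∀ s, MeasurableSet s →
      Tendsto (fun n => ∫ x in s, F n x ∂μ) atTop (𝓝 (∫ x in s, f x ∂μ)))
    (hlim : ∀ᵐ x ∂μ, Tendsto (fun n => F n x) atTop (𝓝 (g x))) :
    f =ᵐ[μ] g := by
  have hg_bound : ∀ᵐ x ∂μ, ‖g x‖ ≤ M x := by
    filter_upwards [hlim, ae_all_iff.2 hbound] with x hx hxM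
    exact le_of_tendsto hx.norm (Eventually.of_forall hxM)
  have hg : Integrable g μ :=
    hM.mono' (aestronglyMeasurable_of_tendsto_ae atTop hF hlim) hg_bound
  refine hf.ae_eq_of_forall_setIntegral_eq _ _ hg fun s hs _ => tendsto_nhds_unique (hset s hs) ?_
  exact tendsto_integral_of_dominated_convergence M (fun n => (hF n).restrict) hM.integrableOn
    (fun n => ae_restrict_of_ae (hbound n)) (ae_restrict_of_ae hlim)

end SetwiseConvergence

theorem AbsContOn.setIntegral_Iic {f f' : ℝ → ℝ} {a b : ℝ} (hf : AbsContOn f f' a b)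
    (hab : a ≤ b) (t : ℝ) :
    ∫ x in Iic t, f' x ∂volume.restrict (Icc a b) = f (projIcc a b hab t) - f a := by
  rw [Measure.restrict_restrict measurableSet_Iic]
  rcases lt_or_ge t a with hta | hat
  · have hempty : Iic t ∩ Icc a b = ∅ :=
      eq_empty_of_forall_notMem fun x hx => (hx.1.trans_lt hta).not_ge hx.2.1
    simp [hempty, projIcc_of_le_left hab hta.le]
  · have hp : (projIcc a b hab t : ℝ) = min b t := by simp [projIcc, hab, hat]
    have hset : Iic t ∩ Icc a b = Icc a (min b t) := by
      ext x; simp only [mem_inter_iff, mem_Iic, mem_Icc, le_min_iff]; tauto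
    rw [hp, hset, integral_Icc_eq_integral_Ioc, ← integral_of_le (le_min hab hat),
      hf.2 _ ⟨le_min hab hat, min_le_left b t⟩]
    ring

theorem tendsto_setIntegral_of_absContOn {ι : Type*} {l : Filter ι} {a b : ℝ} (hab : a ≤ b)
    {f f' M : ℝ → ℝ} {F F' : ι → ℝ → ℝ} (hf : AbsContOn f f' a b)
    (hF : ∀ i, AbsContOn (F i) (F' i) a b)
    (hFf : ∀ t ∈ Icc a b, Tendsto (fun i => F i t) l (𝓝 (f t)))
    (hM : IntegrableOn M (Icc a b)) (hFM : ∀ i, ∀ᵐ t ∂volume.restrict (Icc a b), |F' i t| ≤ M t)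
    {s : Set ℝ} (hs : MeasurableSet s) :
    Tendsto (fun i => ∫ x in s, F' i x ∂volume.restrict (Icc a b)) l
      (𝓝 (∫ x in s, f' x ∂volume.restrict (Icc a b))) := by
  have hIic (t : ℝ) : Tendsto (fun i => ∫ x in Iic t, F' i x ∂volume.restrict (Icc a b)) l
      (𝓝 (∫ x in Iic t, f' x ∂volume.restrict (Icc a b))) := by
    simp only [(hF _).setIntegral_Iic hab, hf.setIntegral_Iic hab]
    exact (hFf _ (projIcc a b hab t).2).sub (hFf a (left_mem_Icc.2 hab))
  have huniv (k : ℝ → ℝ) : ∫ x, k x ∂volume.restrict (Icc a b) =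
      ∫ x in Iic b, k x ∂volume.restrict (Icc a b) := by
    rw [Measure.restrict_restrict measurableSet_Iic, inter_eq_right.2 Icc_subset_Iic_self]
  refine tendsto_setIntegral_of_isPiSystem (BorelSpace.measurable_eq.trans
    (borel_eq_generateFrom_Iic ℝ)) isPiSystem_Iic hM (fun i => (hF i).1)
    (by simpa only [Real.norm_eq_abs] using hFM) hf.1 ?_ ?_ hs
  · simpa only [huniv] using hIic b
  · rintro _ ⟨t, rfl⟩
    exact hIic t

theorem stmt14_general (a b : ℝ) (hab : a < b)
    (f : ℝ → ℝ) (f' : ℝ → ℝ) (F : ℕ → ℝ → ℝ) (F' : ℕ → ℝ → ℝ)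
    (hf : AbsContOn f f' a b) (hF : ∀ n, AbsContOn (F n) (F' n) a b)
    (hunif : TendstoUniformlyOn F f atTop (Icc a b))
    (A : Set ℝ) (hA : MeasurableSet A) (hAsub : A ⊆ Icc a b)
    (g : ℝ → ℝ)
    (hconv : ∀ᵐ t ∂volume.restrict A, Tendsto (fun n => F' n t) atTop (nhds (g t)))
    (M : ℝ → ℝ) (hM : IntegrableOn M (Icc a b))
    (hFM : ∀ n, ∀ᵐ t ∂volume.restrict (Icc a b), |F' n t| ≤ M t) :
    ∀ᵐ t ∂volume.restrict A, f' t = g t := by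
  rw [← Measure.restrict_restrict_of_subset hAsub] at hconv ⊢
  refine ae_eq_of_tendsto_setIntegral_of_tendsto_ae (Integrable.restrict hM)
    (fun n => (hF n).1.aestronglyMeasurable.restrict)
    (fun n => ae_restrict_of_ae (by simpa only [Real.norm_eq_abs] using hFM n))
    (Integrable.restrict hf.1) (fun s hs => ?_) hconv
  rw [Measure.restrict_restrict hs]
  exact tendsto_setIntegral_of_absContOn hab.le hf hF (fun t ht => hunif.tendsto_at ht) hM hFM
    (hs.inter hA)

theorem stmt14 (a b : ℝ) (hab : a < b)
    (f : ℝ → ℝ) (f' : ℝ → ℝ) (F : ℕ → ℝ → ℝ) (F' : ℕ → ℝ → ℝ)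
    (hf : AbsContOn f f' a b) (hF : ∀ n, AbsContOn (F n) (F' n) a b)
    (hunif : TendstoUniformlyOn F f atTop (Icc a b))
    (A : Set ℝ) (hA : MeasurableSet A) (hAsub : A ⊆ Icc a b) (hApos : 0 < volume A)
    (g : ℝ → ℝ)
    (hconv : ∀ᵐ t ∂volume.restrict A, Tendsto (fun n => F' n t) atTop (nhds (g t)))
    (M : ℝ → ℝ) (hM : IntegrableOn M (Icc a b))
    (hfM : ∀ᵐ t ∂volume.restrict (Icc a b), |f' t| ≤ M t)
    (hFM : ∀ n, ∀ᵐ t ∂volume.restrict (Icc a b), |F' n t| ≤ M t) :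
    ∀ᵐ t ∂volume.restrict A, f' t = g t :=
  stmt14_general a b hab f f' F F' hf hF hunif A hA hAsub g hconv M hM hFM
end
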